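/- Let A > 0, δ = π/A, and let π be a probability measure on ℝ supported on at most K points. Let f_π = φ * π and f_{unif,A} = φ * Unif([−A,A]). Then for every integer k with |k| ≤ 2K, 2·TV(f_{unif,A}, f_π) ≥ e^{−k²δ²/2} |1{k=0} − t_k(δ X_K)|, where X_K ~ π. -/

import Mathlib

open MeasureTheory Real Set

/-- Standard Gaussian density. -/
noncomputable def stdGaussianPDF (x : ℝ) : ℝ := (Real.sqrt (2 * π))⁻¹ * Real.exp (-x ^ 2 / 2)

/-- Convolution of the standard Gaussian density with a measure. -/
noncomputable def gaussConv (μ : Measure ℝ) (x : ℝ) : ℝ := ∫ t, stdGaussianPDF (x - t) ∂μ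

/-- Density of the convolution of a standard Gaussian with `Unif([-A,A])`. -/
noncomputable def fUnif (A x : ℝ) : ℝ :=
  ∫ t in Set.Icc (-A) A, stdGaussianPDF (x - t) * (1 / (2 * A))

/-!
Multiplying by `e^{iθx}` and integrating, Fubini and the Fourier transform of the Gaussian give
`∫ e^{iθx} (φ * ν)(x) dx = e^{-θ²/2} charFun ν θ` for every finite measure `ν`, so the Fourier
transform of `f_unif - f_π` at `θ` is `e^{-θ²/2} (sinc (Aθ) - t(θ))`, and it is bounded by the
`L¹` norm of `f_unif - f_π`. At `θ = kπ/A` the sinc term is `1{k = 0}`.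
-/

open Complex (I norm_exp_ofReal_mul_I)
open scoped Complex
open ProbabilityTheory

lemma stdGaussianPDF_eq_gaussianPDFReal : stdGaussianPDF = gaussianPDFReal 0 1 := by
  ext x
  simp [stdGaussianPDF, gaussianPDFReal]

@[fun_prop]
lemma continuous_stdGaussianPDF : Continuous stdGaussianPDF := by
  unfold stdGaussianPDF
  fun_prop

lemma stdGaussianPDF_nonneg (x : ℝ) : 0 ≤ stdGaussianPDF x := by
  unfold stdGaussianPDF
  positivity

lemma integral_stdGaussianPDF_sub (t : ℝ) : ∫ x, stdGaussianPDF (x - t) = 1 := by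
  rw [integral_sub_right_eq_self, stdGaussianPDF_eq_gaussianPDFReal, integral_gaussianPDFReal_eq_one]
  exact one_ne_zero

lemma norm_cexp_ofReal_mul_ofReal_mul_I (θ x : ℝ) : ‖cexp (θ * x * I)‖ = 1 := by
  exact_mod_cast norm_exp_ofReal_mul_I (θ * x)

lemma integrable_cexp_mul_stdGaussianPDF_sub (θ t : ℝ) :
    Integrable fun x : ℝ ↦ cexp (θ * x * I) * stdGaussianPDF (x - t) := by
  refine Integrable.bdd_mul (c := 1) ?_ (by fun_prop) (ae_of_all _ fun x ↦ ?_)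
  · rw [stdGaussianPDF_eq_gaussianPDFReal]
    exact ((integrable_gaussianPDFReal 0 1).comp_sub_right t).ofReal
  · rw [norm_cexp_ofReal_mul_ofReal_mul_I]

lemma integral_cexp_mul_stdGaussianPDF (θ : ℝ) :
    ∫ x : ℝ, cexp (θ * x * I) * stdGaussianPDF x = rexp (-θ ^ 2 / 2) := by
  have h := charFun_gaussianReal (μ := 0) (v := 1) θ
  rw [charFun_apply_real, integral_gaussianReal_eq_integral_smul one_ne_zero] at h
  simp_rw [stdGaussianPDF_eq_gaussianPDFReal, Complex.real_smul, mul_comm _ (cexp _)] at h ⊢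
  rw [h]
  push_cast
  ring_nf

lemma integral_cexp_mul_stdGaussianPDF_sub (θ t : ℝ) :
    ∫ x : ℝ, cexp (θ * x * I) * stdGaussianPDF (x - t) = cexp (θ * t * I) * rexp (-θ ^ 2 / 2) := by
  rw [← integral_cexp_mul_stdGaussianPDF, ← integral_const_mul, ← integral_add_right_eq_self _ t]
  congr with x
  rw [add_sub_cancel_right]
  push_cast
  rw [mul_add, add_mul, Complex.exp_add]
  ring

section GaussConv

variable (μ : Measure ℝ) (θ : ℝ)

lemma cexp_mul_gaussConv (x : ℝ) :
    cexp (θ * x * I) * gaussConv μ x = ∫ t, cexp (θ * x * I) * stdGaussianPDF (x - t) ∂μ := by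
  rw [gaussConv, ← integral_complex_ofReal, integral_const_mul]

variable [IsFiniteMeasure μ]

lemma integrable_uncurry_cexp_mul_stdGaussianPDF_sub :
    Integrable (Function.uncurry fun t x : ℝ ↦ cexp (θ * x * I) * stdGaussianPDF (x - t))
      (μ.prod volume) := by
  refine (integrable_prod_iff (by fun_prop)).2
    ⟨ae_of_all _ (integrable_cexp_mul_stdGaussianPDF_sub θ), ?_⟩
  simp_rw [Function.uncurry_apply_pair, norm_mul, norm_cexp_ofReal_mul_ofReal_mul_I, one_mul,
    Complex.norm_real, norm_of_nonneg (stdGaussianPDF_nonneg _), integral_stdGaussianPDF_sub]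
  exact integrable_const 1

lemma integrable_cexp_mul_gaussConv :
    Integrable fun x : ℝ ↦ cexp (θ * x * I) * gaussConv μ x := by
  simp_rw [cexp_mul_gaussConv]
  exact (integrable_uncurry_cexp_mul_stdGaussianPDF_sub μ θ).integral_prod_right

lemma integral_cexp_mul_gaussConv :
    ∫ x : ℝ, cexp (θ * x * I) * gaussConv μ x = rexp (-θ ^ 2 / 2) * charFun μ θ := by
  simp_rw [cexp_mul_gaussConv]
  rw [← integral_integral_swap (integrable_uncurry_cexp_mul_stdGaussianPDF_sub μ θ)]
  simp_rw [integral_cexp_mul_stdGaussianPDF_sub]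
  rw [integral_mul_const, charFun_apply_real, mul_comm]

end GaussConv

theorem exp_mul_norm_charFun_sub_le_integral_abs_gaussConv_sub (μ ν : Measure ℝ)
    [IsFiniteMeasure μ] [IsFiniteMeasure ν] (θ : ℝ) :
    rexp (-θ ^ 2 / 2) * ‖charFun ν θ - charFun μ θ‖ ≤
      ∫ x, |gaussConv ν x - gaussConv μ x| := calc
  _ = ‖∫ x : ℝ, cexp (θ * x * I) * ((gaussConv ν x - gaussConv μ x : ℝ) : ℂ)‖ := by
    simp_rw [Complex.ofReal_sub, mul_sub]
    rw [integral_sub (integrable_cexp_mul_gaussConv ν θ) (integrable_cexp_mul_gaussConv μ θ),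
      integral_cexp_mul_gaussConv, integral_cexp_mul_gaussConv, ← mul_sub, norm_mul,
      Complex.norm_real, norm_of_nonneg (exp_pos _).le]
  _ ≤ ∫ x : ℝ, ‖cexp (θ * x * I) * ((gaussConv ν x - gaussConv μ x : ℝ) : ℂ)‖ :=
    norm_integral_le_integral_norm _
  _ = ∫ x, |gaussConv ν x - gaussConv μ x| := by
    simp_rw [norm_mul, norm_cexp_ofReal_mul_ofReal_mul_I, one_mul, Complex.norm_real, norm_eq_abs]

section Uniform

variable {A : ℝ} (hA : 0 < A)
include hA

lemma integral_cond_Icc_neg {E : Type*} [NormedAddCommGroup E] [NormedSpace ℝ E] (f : ℝ → E) :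
    ∫ x, f x ∂volume[|Icc (-A) A] = (2 * A)⁻¹ • ∫ x in Icc (-A) A, f x := by
  rw [ProbabilityTheory.cond, integral_smul_measure, Real.volume_Icc, ENNReal.toReal_inv,
    ENNReal.toReal_ofReal (by linarith), sub_neg_eq_add, ← two_mul]

lemma fUnif_eq_gaussConv : fUnif A = gaussConv (volume[|Icc (-A) A]) := by
  ext x
  rw [fUnif, gaussConv, integral_cond_Icc_neg hA, integral_mul_const, smul_eq_mul, mul_comm,
    one_div]

lemma charFun_cond_Icc_neg (θ : ℝ) : charFun (volume[|Icc (-A) A]) θ = sinc (A * θ) := by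
  rw [charFun_apply_real, integral_cond_Icc_neg hA, integral_Icc_eq_integral_Ioc,
    ← intervalIntegral.integral_of_le (by linarith)]
  have hA' : (A : ℂ) ≠ 0 := by exact_mod_cast hA.ne'
  rcases eq_or_ne θ 0 with rfl | hθ
  · simp only [Complex.ofReal_zero, zero_mul, Complex.exp_zero, intervalIntegral.integral_const,
      sub_neg_eq_add, Complex.real_smul, mul_zero, sinc_zero]
    push_cast
    field_simp
    ring
  · have hθI : (θ : ℂ) * I ≠ 0 := by simp [hθ]
    simp_rw [mul_right_comm (θ : ℂ) _ I]
    rw [integral_exp_mul_complex hθI, sinc_of_ne_zero (mul_ne_zero hA.ne' hθ), Complex.real_smul]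
    push_cast
    rw [Complex.sin, show -(A * θ : ℂ) * I = θ * I * -A by ring,
      show (A * θ : ℂ) * I = θ * I * A by ring]
    field_simp
    rw [Complex.I_sq]
    ring

end Uniform

lemma sinc_int_mul_pi (k : ℤ) : sinc (k * π) = if k = 0 then 1 else 0 := by
  split_ifs with hk
  · simp [hk]
  · rw [sinc_of_ne_zero (by simp [hk, pi_ne_zero]), sin_int_mul_pi, zero_div]

theorem tv_lower_bound_trig_moment_general
    (A : ℝ) (hA : 0 < A)
    (μ : Measure ℝ) (hμ : IsProbabilityMeasure μ)
    (k : ℤ) :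
    Real.exp (-(k : ℝ) ^ 2 * (π / A) ^ 2 / 2) *
        ‖(if k = 0 then (1 : ℂ) else 0) -
          ∫ t, Complex.exp (Complex.I * (k : ℂ) * ((π / A : ℝ) : ℂ) * (t : ℂ)) ∂μ‖ ≤
      2 * ((1 / 2) * ∫ x, |fUnif A x - gaussConv μ x|) := by
  have hunif : charFun (volume[|Icc (-A) A]) (k * (π / A)) = if k = 0 then 1 else 0 := by
    rw [charFun_cond_Icc_neg hA, mul_left_comm, mul_div_cancel₀ _ hA.ne', sinc_int_mul_pi]
    split_ifs <;> simp
  have hμ_charFun : ∫ t, cexp (I * k * (π / A : ℝ) * t) ∂μ = charFun μ (k * (π / A)) := by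
    rw [charFun_apply_real]
    congr with t
    push_cast
    ring_nf
  rw [hμ_charFun, ← hunif, fUnif_eq_gaussConv hA, one_div, mul_inv_cancel_left₀ two_ne_zero]
  convert exp_mul_norm_charFun_sub_le_integral_abs_gaussConv_sub μ (volume[|Icc (-A) A])
    (k * (π / A)) using 3
  ring

theorem tv_lower_bound_trig_moment
    (A : ℝ) (hA : 0 < A) (K : ℕ)
    (μ : Measure ℝ) (hμ : IsProbabilityMeasure μ)
    (s : Finset ℝ) (hcard : s.card ≤ K) (hsupp : μ (↑s : Set ℝ)ᶜ = 0)
    (k : ℤ) (hk : |k| ≤ 2 * (K : ℤ)) :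
    Real.exp (-(k : ℝ) ^ 2 * (π / A) ^ 2 / 2) *
        ‖(if k = 0 then (1 : ℂ) else 0) -
          ∫ t, Complex.exp (Complex.I * (k : ℂ) * ((π / A : ℝ) : ℂ) * (t : ℂ)) ∂μ‖ ≤
      2 * ((1 / 2) * ∫ x, |fUnif A x - gaussConv μ x|) :=
  tv_lower_bound_trig_moment_general A hA μ hμ k
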